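/- arXiv:1310.3570 — 8 statements merged into one kernel-verified Lean document; each statement's English description precedes it below -/
import Mathlib

section
/- Let D be an endomorphism of a finite-dimensional vector space V over a field 𝕜 and let k ≥ 0 be an integer. Then dim H^k(V,D) = rank(D^{2k}) − 2·rank(D^{2k+1}) + rank(D^{2k+2}); equivalently, dim(range(D^{2k}) ∩ ker D) + 2·rank(D^{2k+1}) = dim(range(D^{2k+1}) ∩ ker D) + rank(D^{2k}) + rank(D^{2k+2}). (This number is the number of Jordan blocks of size exactly 2k+1 in the nilpotent part of D, so this is the dimension form of Theorem 3.2: H^k picks out the bottom vectors of Jordan blocks of size 2k+1.) -/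
/-!
Rank–nullity for `D` restricted to `range D^m` gives
`dim (range D^m ⊓ ker D) = rank D^m - rank D^(m+1)`. Applying this for `m = 2k` and `m = 2k+1`
and subtracting, the dimension of `H^k = (range D^{2k} ⊓ ker D) / (range D^{2k+1} ⊓ ker D)` is the
second difference `rank D^{2k} - 2 rank D^{2k+1} + rank D^{2k+2}`.
-/

open LinearMap Module

namespace Submodule

variable {K V W : Type*} [DivisionRing K] [AddCommGroup V] [Module K V] [FiniteDimensional K V]
  [AddCommGroup W] [Module K W]

theorem finrank_inf_ker_add_finrank_map (U : Submodule K V) (f : V →ₗ[K] W) :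
    finrank K ↥(U ⊓ ker f) + finrank K ↥(U.map f) = finrank K U := by
  have hker : ker (f.domRestrict U) = comap U.subtype (ker f) := by
    ext x
    simp [mem_ker]
  rw [← (f.domRestrict U).finrank_range_add_finrank_ker, range_domRestrict, hker,
    ← finrank_map_subtype_eq, map_comap_subtype, add_comm]

theorem finrank_quotient_comap_subtype_add_finrank {U U' : Submodule K V} (h : U' ≤ U) :
    finrank K (U ⧸ comap U.subtype U') + finrank K U' = finrank K U := by
  rw [← (comapSubtypeEquivOfLe h).finrank_eq, finrank_quotient_add_finrank]

end Submodule

namespace Module.End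

theorem range_pow_succ_le_range_pow {R M : Type*} [Semiring R] [AddCommMonoid M] [Module R M]
    (D : Module.End R M) (m : ℕ) : range (D ^ (m + 1)) ≤ range (D ^ m) := by
  rw [pow_succ, mul_eq_comp]
  exact range_comp_le_range D (D ^ m)

variable {K V : Type*} [DivisionRing K] [AddCommGroup V] [Module K V] [FiniteDimensional K V]

theorem finrank_range_pow_inf_ker_add_finrank_range_pow_succ (D : Module.End K V) (m : ℕ) :
    finrank K ↥(range (D ^ m) ⊓ ker D) + finrank K ↥(range (D ^ (m + 1))) =
      finrank K ↥(range (D ^ m)) := by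
  rw [← (range (D ^ m)).finrank_inf_ker_add_finrank_map D, pow_succ', mul_eq_comp, range_comp]

end Module.End

/-- Dimension form of Theorem 3.2: for an endomorphism `D` of a
finite-dimensional vector space `V` and `k ≥ 0`, with
`H^k(V,D) = (range D^{2k} ⊓ ker D) / (range D^{2k+1} ⊓ ker D)`, one has
`dim H^k(V,D) = rank D^{2k} − 2 rank D^{2k+1} + rank D^{2k+2}`, equivalently
`dim (range D^{2k} ⊓ ker D) + 2 rank D^{2k+1}
  = dim (range D^{2k+1} ⊓ ker D) + rank D^{2k} + rank D^{2k+2}`. -/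
theorem stmt0 {𝕜 V : Type*} [Field 𝕜] [AddCommGroup V] [Module 𝕜 V] [FiniteDimensional 𝕜 V]
    (D : Module.End 𝕜 V) (k : ℕ) :
    (finrank 𝕜 (↥(range (D ^ (2 * k)) ⊓ ker D) ⧸
        Submodule.comap (range (D ^ (2 * k)) ⊓ ker D).subtype
          (range (D ^ (2 * k + 1)) ⊓ ker D)) : ℤ) =
      (finrank 𝕜 ↥(range (D ^ (2 * k))) : ℤ) - 2 * finrank 𝕜 ↥(range (D ^ (2 * k + 1))) +
        finrank 𝕜 ↥(range (D ^ (2 * k + 2))) ∧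
    finrank 𝕜 ↥(range (D ^ (2 * k)) ⊓ ker D) + 2 * finrank 𝕜 ↥(range (D ^ (2 * k + 1))) =
      finrank 𝕜 ↥(range (D ^ (2 * k + 1)) ⊓ ker D) + finrank 𝕜 ↥(range (D ^ (2 * k))) +
        finrank 𝕜 ↥(range (D ^ (2 * k + 2))) := by
  have h_even := D.finrank_range_pow_inf_ker_add_finrank_range_pow_succ (2 * k)
  have h_odd := D.finrank_range_pow_inf_ker_add_finrank_range_pow_succ (2 * k + 1)
  rw [show 2 * k + 1 + 1 = 2 * k + 2 from rfl] at h_odd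
  have h_quot := Submodule.finrank_quotient_comap_subtype_add_finrank
    (inf_le_inf_right (ker D) (D.range_pow_succ_le_range_pow (2 * k)))
  exact ⟨by omega, by omega⟩
end

section
/- Let D be an endomorphism of a finite-dimensional vector space V over a field such that D² is a semisimple endomorphism (every D²-invariant subspace has a D²-invariant complement). Then range(D²) ∩ ker(D) = 0; consequently range(D^{2k}) ∩ ker(D) = 0 and hence H^k(V,D) = 0 for every k ≥ 1, so the total higher Dirac cohomology reduces to H^0(V,D) = ker D/(range D ∩ ker D). (This is the linear-algebra content of the Corollary: for modules with infinitesimal character the higher Dirac cohomology coincides with the usual Dirac cohomology.) -/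
/-!
Semisimplicity of `D²` provides a `D²`-invariant complement `q` of `ker D²`. Then `D²` maps
`V = ker D² ⊕ q` into `q`, while `ker D ⊆ ker D²`, so `range D² ∩ ker D ⊆ q ∩ ker D² = 0`.
The ranges of the higher even powers of `D` are smaller, so they meet `ker D` trivially too,
and the higher Dirac cohomology groups are quotients of `0`.
-/

open LinearMap Module

namespace LinearMap

variable {R M : Type*} [Semiring R] [AddCommMonoid M] [Module R M]

theorem range_le_of_codisjoint_ker {f : Module.End R M} {q : Submodule R M}
    (hq : ∀ x ∈ q, f x ∈ q) (hc : Codisjoint (ker f) q) : range f ≤ q := by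
  rintro _ ⟨x, rfl⟩
  have hx : x ∈ ker f ⊔ q := hc.eq_top ▸ Submodule.mem_top
  obtain ⟨a, ha, b, hb, rfl⟩ := Submodule.mem_sup.mp hx
  rw [map_add, mem_ker.mp ha, zero_add]
  exact hq b hb

theorem range_sq_inf_ker_eq_bot {D : Module.End R M} {q : Submodule R M}
    (hq : ∀ x ∈ q, (D ^ 2) x ∈ q) (hc : IsCompl (ker (D ^ 2)) q) :
    range (D ^ 2) ⊓ ker D = ⊥ := by
  have hker : ker D ≤ ker (D ^ 2) := by
    simpa using (iterateKer D).monotone (by norm_num : 1 ≤ 2)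
  refine eq_bot_mono (inf_le_inf (range_le_of_codisjoint_ker hq hc.codisjoint) hker) ?_
  exact hc.disjoint.symm.eq_bot

theorem range_pow_inf_ker_le {D : Module.End R M} {m n : ℕ} (h : m ≤ n) :
    range (D ^ n) ⊓ ker D ≤ range (D ^ m) ⊓ ker D :=
  inf_le_inf_right _ ((iterateRange D).monotone h)

end LinearMap

theorem stmt1_general {𝕜 V : Type*} [Field 𝕜] [AddCommGroup V] [Module 𝕜 V]
    (D : Module.End 𝕜 V)
    (hss : ∀ p : Submodule 𝕜 V, (∀ x ∈ p, (D ^ 2) x ∈ p) →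
      ∃ q : Submodule 𝕜 V, (∀ x ∈ q, (D ^ 2) x ∈ q) ∧ IsCompl p q) :
    range (D ^ 2) ⊓ ker D = ⊥ ∧
    (∀ k : ℕ, 1 ≤ k → range (D ^ (2 * k)) ⊓ ker D = ⊥) ∧
    (∀ k : ℕ, 1 ≤ k →
      Subsingleton (↥(range (D ^ (2 * k)) ⊓ ker D) ⧸
        Submodule.comap (range (D ^ (2 * k)) ⊓ ker D).subtype
          (range (D ^ (2 * k + 1)) ⊓ ker D))) := by
  obtain ⟨q, hq, hc⟩ := hss (ker (D ^ 2)) fun x hx => by rw [mem_ker.mp hx]; exact zero_mem _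
  have hsq : range (D ^ 2) ⊓ ker D = ⊥ := range_sq_inf_ker_eq_bot hq hc
  have heven : ∀ k : ℕ, 1 ≤ k → range (D ^ (2 * k)) ⊓ ker D = ⊥ := fun k hk =>
    eq_bot_mono (range_pow_inf_ker_le (by omega)) hsq
  refine ⟨hsq, heven, fun k hk => ?_⟩
  rw [heven k hk]
  infer_instance

/-- If `D²` is a semisimple endomorphism of a finite-dimensional
vector space `V` (every `D²`-invariant subspace has a `D²`-invariant complement), then
`range(D²) ∩ ker D = 0`; consequently `range(D^{2k}) ∩ ker D = 0` and hence
`H^k(V,D) = 0` for every `k ≥ 1`. -/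
theorem stmt1 {𝕜 V : Type*} [Field 𝕜] [AddCommGroup V] [Module 𝕜 V] [FiniteDimensional 𝕜 V]
    (D : Module.End 𝕜 V)
    (hss : ∀ p : Submodule 𝕜 V, (∀ x ∈ p, (D ^ 2) x ∈ p) →
      ∃ q : Submodule 𝕜 V, (∀ x ∈ q, (D ^ 2) x ∈ q) ∧ IsCompl p q) :
    range (D ^ 2) ⊓ ker D = ⊥ ∧
    (∀ k : ℕ, 1 ≤ k → range (D ^ (2 * k)) ⊓ ker D = ⊥) ∧
    (∀ k : ℕ, 1 ≤ k →
      Subsingleton (↥(range (D ^ (2 * k)) ⊓ ker D) ⧸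
        Submodule.comap (range (D ^ (2 * k)) ⊓ ker D).subtype
          (range (D ^ (2 * k + 1)) ⊓ ker D))) :=
  stmt1_general D hss
end

section
/- Let D and a be endomorphisms of a vector space V over a field such that a ∘ D² = D² ∘ a, and let k ≥ 0. Then for every x ∈ range(D^{2k}) ∩ ker(D), one has (D∘a + a∘D)(x) ∈ range(D^{2k+1}) ∩ ker(D). In particular the operator D∘a + a∘D induces the zero map on H^k(V,D). (This is the key step in the proof of Theorem 3.4, the analogue of Vogan's conjecture for higher Dirac cohomology.) -/
open LinearMap Module

/-!
Since `D x = 0`, the anticommutator sends `x` to `D (a x)`. Writing `x = D^{2k} y`, the commutation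
of `a` with `D²`, hence with `D^{2k}`, gives `D (a x) = D^{2k+1} (a y)`; and
`D (D (a x)) = a (D² x) = 0`.
-/

namespace Module.End

variable {R M : Type*} [Semiring R] [AddCommMonoid M] [Module R M] {D a : Module.End R M}

theorem commute_pow_two_mul (h : Commute a (D ^ 2)) (k : ℕ) : Commute a (D ^ (2 * k)) := by
  rw [pow_mul]
  exact h.pow_right k

theorem anticommutator_apply_of_mem_ker {x : M} (hx : x ∈ ker D) :
    (D ∘ₗ a + a ∘ₗ D) x = D (a x) := by
  simp [mem_ker.1 hx]

theorem apply_apply_mem_range_pow_succ (h : Commute a (D ^ 2)) {k : ℕ} {x : M}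
    (hx : x ∈ range (D ^ (2 * k))) : D (a x) ∈ range (D ^ (2 * k + 1)) := by
  obtain ⟨y, rfl⟩ := hx
  refine ⟨a y, ?_⟩
  rw [pow_succ', mul_apply, ← mul_apply a, (commute_pow_two_mul h k).eq, mul_apply]

theorem apply_apply_mem_ker (h : Commute a (D ^ 2)) {x : M} (hx : x ∈ ker D) :
    D (a x) ∈ ker D := by
  rw [mem_ker] at hx ⊢
  rw [← mul_apply, ← sq, ← mul_apply, ← h.eq, mul_apply, sq, mul_apply, hx, map_zero, map_zero]

end Module.End

/-- If `a ∘ D² = D² ∘ a` then for every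
`x ∈ range(D^{2k}) ∩ ker D`, one has `(D∘a + a∘D) x ∈ range(D^{2k+1}) ∩ ker D`;
in particular `D∘a + a∘D` induces the zero map on `H^k(V,D)`. -/
theorem stmt2 {𝕜 V : Type*} [Field 𝕜] [AddCommGroup V] [Module 𝕜 V]
    (D a : Module.End 𝕜 V) (hcomm : a ∘ₗ (D ^ 2) = (D ^ 2) ∘ₗ a) (k : ℕ) :
    ∀ x ∈ range (D ^ (2 * k)) ⊓ ker D,
      (D ∘ₗ a + a ∘ₗ D) x ∈ range (D ^ (2 * k + 1)) ⊓ ker D := by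
  have h : Commute a (D ^ 2) := hcomm
  rintro x ⟨hrange, hker⟩
  rw [End.anticommutator_apply_of_mem_ker hker]
  exact ⟨End.apply_apply_mem_range_pow_succ h hrange, End.apply_apply_mem_ker h hker⟩
end

section
/- Let V be a finite-dimensional vector space over a field with a ℤ/2-grading V = V⁺ ⊕ V⁻, and let D be an odd endomorphism of V. Then, as an equality of integers, Σ_{k≥0} ( dim H^k(V,D)⁺ − dim H^k(V,D)⁻ ) = dim V⁺ − dim V⁻, where all but finitely many terms of the sum vanish. (This is the linear-algebra content of Theorem 3.6: the higher Dirac index I(V) = H(V)⁺ − H(V)⁻ equals V⊗S⁺ − V⊗S⁻ on each isotypic component.) -/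
/-!
Write `R n = range (D ^ n)` and `sdim W = dim (W ∩ V⁺) - dim (W ∩ V⁻)`. Every `R n` is graded, and
as `D` is odd it maps `R n ∩ V^±` onto `R (n + 1) ∩ V^∓` with kernel `R n ∩ ker D ∩ V^±`, so
rank–nullity gives `sdim (R n ∩ ker D) = sdim (R n) + sdim (R (n + 1))`. The `k`-th term of the sum
is therefore `sdim (R (2k)) - sdim (R (2k + 2))`, and the sum telescopes to `sdim (R 0) = dim V⁺ - dim V⁻`:
the ranges stabilise at a subspace on which `D` is an odd bijection, whose superdimension is `0`.
-/

open LinearMap Module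

theorem Submodule.finrank_map_add_finrank_inf_ker {K V W : Type*} [DivisionRing K]
    [AddCommGroup V] [Module K V] [AddCommGroup W] [Module K W] [FiniteDimensional K V]
    (f : V →ₗ[K] W) (S : Submodule K V) :
    finrank K ↥(S.map f) + finrank K ↥(S ⊓ ker f) = finrank K S := by
  rw [← range_domRestrict, ← map_comap_subtype, finrank_map_subtype_eq, ← ker_domRestrict]
  exact finrank_range_add_finrank_ker _

theorem LinearMap.range_pow_succ_eq_map {R M : Type*} [Semiring R] [AddCommMonoid M] [Module R M]
    (f : Module.End R M) (n : ℕ) : range (f ^ (n + 1)) = (range (f ^ n)).map f := by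
  rw [pow_succ', Module.End.mul_eq_comp, range_comp]

theorem finsum_sub_succ_eq_of_eventually_zero {G : Type*} [AddCommGroup G] {f : ℕ → G} {N : ℕ}
    (hf : ∀ n, N ≤ n → f n = 0) : ∑ᶠ k, (f k - f (k + 1)) = f 0 := by
  have hsupp : Function.support (fun k => f k - f (k + 1)) ⊆ Finset.range N := by
    intro k hk
    by_contra hkN
    simp_all [hf k (by simpa using hkN), hf (k + 1) (by simp at hkN; omega)]
  rw [finsum_eq_sum_of_support_subset _ hsupp, Finset.sum_range_sub', hf N le_rfl, sub_zero]

namespace Submodule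

variable {K V : Type*} [DivisionRing K] [AddCommGroup V] [Module K V]

def IsGraded (Vp Vm W : Submodule K V) : Prop :=
  W ≤ W ⊓ Vp ⊔ W ⊓ Vm

noncomputable def superdim (Vp Vm W : Submodule K V) : ℤ :=
  finrank K ↥(W ⊓ Vp) - finrank K ↥(W ⊓ Vm)

variable {Vp Vm W : Submodule K V} {D : Module.End K V}

theorem isGraded_top (h : Codisjoint Vp Vm) : IsGraded Vp Vm ⊤ := by
  simpa [IsGraded] using h.eq_top.ge

theorem IsGraded.symm (hW : IsGraded Vp Vm W) : IsGraded Vm Vp W := by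
  rwa [IsGraded, sup_comm]

namespace IsGraded

theorem map_inf_eq (hW : IsGraded Vp Vm W) (h : Disjoint Vp Vm)
    (hp : ∀ x ∈ Vp, D x ∈ Vm) (hm : ∀ x ∈ Vm, D x ∈ Vp) :
    (W ⊓ Vp).map D = W.map D ⊓ Vm := by
  refine le_antisymm (fun _ ⟨x, ⟨hxW, hxp⟩, hx⟩ => hx ▸ ⟨mem_map_of_mem hxW, hp x hxp⟩) ?_
  rintro _ ⟨⟨w, hw, rfl⟩, hDw⟩
  obtain ⟨p, hp', m, ⟨-, hmm⟩, rfl⟩ := mem_sup.mp (hW hw)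
  -- `D m` lies in `Vp`, and also in `Vm` as the difference `D (p + m) - D p`.
  have hDm : D m = 0 :=
    disjoint_def.mp h _ (hm m hmm) (by simpa using Vm.sub_mem hDw (hp p hp'.2))
  exact ⟨p, hp', by rw [map_add, hDm, add_zero]⟩

theorem map (hW : IsGraded Vp Vm W) (hp : ∀ x ∈ Vp, D x ∈ Vm) (hm : ∀ x ∈ Vm, D x ∈ Vp) :
    IsGraded Vp Vm (W.map D) := by
  calc W.map D ≤ (W ⊓ Vp).map D ⊔ (W ⊓ Vm).map D := map_sup (W ⊓ Vp) (W ⊓ Vm) D ▸ map_mono hW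
    _ ≤ W.map D ⊓ Vp ⊔ W.map D ⊓ Vm := by
      rw [sup_comm]
      exact sup_le_sup
        (le_inf (map_mono inf_le_left) (map_le_iff_le_comap.mpr (inf_le_right.trans hm)))
        (le_inf (map_mono inf_le_left) (map_le_iff_le_comap.mpr (inf_le_right.trans hp)))

variable [FiniteDimensional K V]

theorem finrank_inf_eq (hW : IsGraded Vp Vm W) (h : Disjoint Vp Vm)
    (hp : ∀ x ∈ Vp, D x ∈ Vm) (hm : ∀ x ∈ Vm, D x ∈ Vp) :
    finrank K ↥(W ⊓ Vp) = finrank K ↥(W.map D ⊓ Vm) + finrank K ↥(W ⊓ ker D ⊓ Vp) := by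
  rw [← hW.map_inf_eq h hp hm, inf_right_comm, finrank_map_add_finrank_inf_ker]

theorem superdim_inf_ker (hW : IsGraded Vp Vm W) (h : Disjoint Vp Vm)
    (hp : ∀ x ∈ Vp, D x ∈ Vm) (hm : ∀ x ∈ Vm, D x ∈ Vp) :
    superdim Vp Vm (W ⊓ ker D) = superdim Vp Vm W + superdim Vp Vm (W.map D) := by
  have hplus := hW.finrank_inf_eq h hp hm
  have hminus := hW.symm.finrank_inf_eq h.symm hm hp
  simp only [superdim]
  omega

theorem superdim_eq_zero_of_map_eq (hW : IsGraded Vp Vm W) (h : Disjoint Vp Vm)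
    (hp : ∀ x ∈ Vp, D x ∈ Vm) (hm : ∀ x ∈ Vm, D x ∈ Vp) (hWD : W.map D = W) :
    superdim Vp Vm W = 0 := by
  have hplus := hW.finrank_inf_eq h hp hm
  have hminus := hW.symm.finrank_inf_eq h.symm hm hp
  rw [hWD] at hplus hminus
  simp only [superdim]
  omega

end IsGraded

theorem isGraded_range_pow (h : Codisjoint Vp Vm)
    (hp : ∀ x ∈ Vp, D x ∈ Vm) (hm : ∀ x ∈ Vm, D x ∈ Vp) (n : ℕ) :
    IsGraded Vp Vm (range (D ^ n)) := by
  induction n with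
  | zero => simpa [Module.End.one_eq_id] using isGraded_top h
  | succ n ih => simpa [range_pow_succ_eq_map] using ih.map hp hm

end Submodule

/-- Linear-algebra content of Theorem 3.6: for a ℤ/2-graded
finite-dimensional vector space `V = V⁺ ⊕ V⁻` with an odd endomorphism `D`,
`Σ_{k≥0} (dim H^k(V,D)⁺ − dim H^k(V,D)⁻) = dim V⁺ − dim V⁻`,
where `H^k(V,D)^± = ((range D^{2k} ⊓ ker D) ⊓ V^±)/((range D^{2k+1} ⊓ ker D) ⊓ V^±)`
and all but finitely many terms vanish (the sum is a `finsum`). -/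
theorem stmt3 {𝕜 V : Type*} [Field 𝕜] [AddCommGroup V] [Module 𝕜 V] [FiniteDimensional 𝕜 V]
    (Vp Vm : Submodule 𝕜 V) (hcompl : IsCompl Vp Vm)
    (D : Module.End 𝕜 V)
    (hoddp : ∀ x ∈ Vp, D x ∈ Vm) (hoddm : ∀ x ∈ Vm, D x ∈ Vp) :
    ∑ᶠ k : ℕ,
      ((((finrank 𝕜 ↥((range (D ^ (2 * k)) ⊓ ker D) ⊓ Vp) : ℤ) -
          finrank 𝕜 ↥((range (D ^ (2 * k + 1)) ⊓ ker D) ⊓ Vp)) -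
        ((finrank 𝕜 ↥((range (D ^ (2 * k)) ⊓ ker D) ⊓ Vm) : ℤ) -
          finrank 𝕜 ↥((range (D ^ (2 * k + 1)) ⊓ ker D) ⊓ Vm)))) =
      (finrank 𝕜 Vp : ℤ) - finrank 𝕜 Vm := by
  have hgraded := Submodule.isGraded_range_pow hcompl.codisjoint hoddp hoddm
  obtain ⟨N, hN⟩ := IsArtinian.monotone_stabilizes D.iterateRange
  have hstable (n : ℕ) (hn : N ≤ n) : Vp.superdim Vm (range (D ^ n)) = 0 :=
    (hgraded n).superdim_eq_zero_of_map_eq hcompl.disjoint hoddp hoddm <| by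
      rw [← range_pow_succ_eq_map]
      exact (hN (n + 1) (by omega)).symm.trans (hN n hn)
  calc _ = ∑ᶠ k : ℕ, (Vp.superdim Vm (range (D ^ (2 * k)) ⊓ ker D) -
        Vp.superdim Vm (range (D ^ (2 * k + 1)) ⊓ ker D)) :=
        finsum_congr fun k => by simp only [Submodule.superdim]; ring
    _ = ∑ᶠ k : ℕ, (Vp.superdim Vm (range (D ^ (2 * k))) -
        Vp.superdim Vm (range (D ^ (2 * (k + 1))))) := finsum_congr fun k => by
        rw [(hgraded _).superdim_inf_ker hcompl.disjoint hoddp hoddm,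
          (hgraded _).superdim_inf_ker hcompl.disjoint hoddp hoddm,
          ← range_pow_succ_eq_map, ← range_pow_succ_eq_map]
        ring_nf
    _ = Vp.superdim Vm (range (D ^ (2 * 0))) :=
        finsum_sub_succ_eq_of_eventually_zero (N := N) fun k hk => hstable _ (by omega)
    _ = _ := by
        rw [Nat.mul_zero, pow_zero, Module.End.one_eq_id, range_id, Submodule.superdim, top_inf_eq,
          top_inf_eq]
end

section
/- Let H₁, H₂, H₃ be finite-dimensional vector spaces over a field. Then there exist linear maps f : H₁ → H₂, g : H₂ → H₃, h : H₃ → H₁ forming an exact triangle (i.e. range f = ker g, range g = ker h, range h = ker f) if and only if: (1) dim H₁ + dim H₂ + dim H₃ is even, and (2) the three dimensions satisfy the triangle inequalities dim H₁ ≤ dim H₂ + dim H₃, dim H₂ ≤ dim H₁ + dim H₃, and dim H₃ ≤ dim H₁ + dim H₂. (Corollary 4.2.) -/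
open LinearMap Module

/-! Exactness at `H₁` and rank–nullity for `f` give `dim H₁ = rank h + rank f`, and likewise at
`H₂` and `H₃`, so the dimensions are the pairwise sums `c + a`, `a + b`, `b + c` of the ranks
`a, b, c` of `f, g, h`; such triples are exactly those with even sum satisfying the triangle
inequalities. Conversely, the cyclic shifts `C × A → A × B → B × C → C × A`, `(z, x) ↦ (x, 0)`,
form an exact triangle, which transports to `H₁, H₂, H₃` along isomorphisms. -/

theorem Nat.exists_eq_pairwise_add_iff (d₁ d₂ d₃ : ℕ) :
    (∃ a b c : ℕ, d₁ = c + a ∧ d₂ = a + b ∧ d₃ = b + c) ↔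
      Even (d₁ + d₂ + d₃) ∧ d₁ ≤ d₂ + d₃ ∧ d₂ ≤ d₁ + d₃ ∧ d₃ ≤ d₁ + d₂ := by
  constructor
  · rintro ⟨a, b, c, rfl, rfl, rfl⟩
    exact ⟨⟨a + b + c, by ring⟩, by omega, by omega, by omega⟩
  · rintro ⟨⟨k, hk⟩, h₁, h₂, h₃⟩
    exact ⟨(d₁ + d₂ - d₃) / 2, (d₂ + d₃ - d₁) / 2, (d₃ + d₁ - d₂) / 2,
      by omega, by omega, by omega⟩

theorem LinearMap.finrank_range_add_finrank_range_of_range_eq_ker {K M N P : Type*}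
    [DivisionRing K] [AddCommGroup M] [Module K M] [FiniteDimensional K M]
    [AddCommGroup N] [Module K N] [AddCommGroup P] [Module K P]
    {f : M →ₗ[K] N} {h : P →ₗ[K] M} (hhf : range h = ker f) :
    finrank K (range f) + finrank K (range h) = finrank K M := by
  rw [hhf, finrank_range_add_finrank_ker]

theorem Function.Exact.inl_comp_snd (R A B C : Type*) [Semiring R]
    [AddCommMonoid A] [Module R A] [AddCommMonoid B] [Module R B]
    [AddCommMonoid C] [Module R C] :
    Function.Exact (inl R B C ∘ₗ snd R A B) (inl R C A ∘ₗ snd R B C) := by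
  rw [(snd_surjective (R := R) (M := A)).comp_exact_iff_exact,
    (inl_injective (R := R) (M₂ := A)).comp_exact_iff_exact]
  exact Exact.inl_snd

theorem Function.Exact.linearEquiv_conj {R M N P M' N' P' : Type*} [Semiring R]
    [AddCommMonoid M] [Module R M] [AddCommMonoid N] [Module R N]
    [AddCommMonoid P] [Module R P] [AddCommMonoid M'] [Module R M']
    [AddCommMonoid N'] [Module R N'] [AddCommMonoid P'] [Module R P']
    {φ : M →ₗ[R] N} {ψ : N →ₗ[R] P} (hφψ : Function.Exact φ ψ)
    (e₁ : M ≃ₗ[R] M') (e₂ : N ≃ₗ[R] N') (e₃ : P ≃ₗ[R] P') :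
    Function.Exact ((e₂ : N →ₗ[R] N') ∘ₗ φ ∘ₗ (e₁.symm : M' →ₗ[R] M))
      ((e₃ : P →ₗ[R] P') ∘ₗ ψ ∘ₗ (e₂.symm : N' →ₗ[R] N)) :=
  hφψ.of_ladder_linearEquiv_of_exact (e₁ := e₁) (e₂ := e₂) (e₃ := e₃)
    (by ext; simp) (by ext; simp)

theorem exists_exact_triangle_of_finrank_eq {K H₁ H₂ H₃ : Type*} [DivisionRing K]
    [AddCommGroup H₁] [Module K H₁] [FiniteDimensional K H₁]
    [AddCommGroup H₂] [Module K H₂] [FiniteDimensional K H₂]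
    [AddCommGroup H₃] [Module K H₃] [FiniteDimensional K H₃]
    {a b c : ℕ} (h₁ : finrank K H₁ = c + a) (h₂ : finrank K H₂ = a + b)
    (h₃ : finrank K H₃ = b + c) :
    ∃ (f : H₁ →ₗ[K] H₂) (g : H₂ →ₗ[K] H₃) (h : H₃ →ₗ[K] H₁),
      Function.Exact f g ∧ Function.Exact g h ∧ Function.Exact h f := by
  let e₁ := LinearEquiv.ofFinrankEq (R := K) ((Fin c → K) × (Fin a → K)) H₁ (by simp [h₁])
  let e₂ := LinearEquiv.ofFinrankEq (R := K) ((Fin a → K) × (Fin b → K)) H₂ (by simp [h₂])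
  let e₃ := LinearEquiv.ofFinrankEq (R := K) ((Fin b → K) × (Fin c → K)) H₃ (by simp [h₃])
  exact ⟨_, _, _, (Function.Exact.inl_comp_snd K _ _ _).linearEquiv_conj e₁ e₂ e₃,
    (Function.Exact.inl_comp_snd K _ _ _).linearEquiv_conj e₂ e₃ e₁,
    (Function.Exact.inl_comp_snd K _ _ _).linearEquiv_conj e₃ e₁ e₂⟩

/-- Corollary 4.2. Finite-dimensional vector spaces `H₁, H₂, H₃`
admit an exact triangle `f : H₁ → H₂`, `g : H₂ → H₃`, `h : H₃ → H₁`
(`range f = ker g`, `range g = ker h`, `range h = ker f`) if and only if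
`dim H₁ + dim H₂ + dim H₃` is even and the three dimensions satisfy the
triangle inequalities. -/
theorem stmt8 {𝕜 H₁ H₂ H₃ : Type*} [Field 𝕜]
    [AddCommGroup H₁] [Module 𝕜 H₁] [FiniteDimensional 𝕜 H₁]
    [AddCommGroup H₂] [Module 𝕜 H₂] [FiniteDimensional 𝕜 H₂]
    [AddCommGroup H₃] [Module 𝕜 H₃] [FiniteDimensional 𝕜 H₃] :
    (∃ (f : H₁ →ₗ[𝕜] H₂) (g : H₂ →ₗ[𝕜] H₃) (h : H₃ →ₗ[𝕜] H₁),
        range f = ker g ∧ range g = ker h ∧ range h = ker f) ↔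
      (Even (finrank 𝕜 H₁ + finrank 𝕜 H₂ + finrank 𝕜 H₃) ∧
        finrank 𝕜 H₁ ≤ finrank 𝕜 H₂ + finrank 𝕜 H₃ ∧
        finrank 𝕜 H₂ ≤ finrank 𝕜 H₁ + finrank 𝕜 H₃ ∧
        finrank 𝕜 H₃ ≤ finrank 𝕜 H₁ + finrank 𝕜 H₂) := by
  rw [← Nat.exists_eq_pairwise_add_iff]
  constructor
  · rintro ⟨f, g, h, hfg, hgh, hhf⟩
    have r₁ := finrank_range_add_finrank_range_of_range_eq_ker hhf
    have r₂ := finrank_range_add_finrank_range_of_range_eq_ker hfg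
    have r₃ := finrank_range_add_finrank_range_of_range_eq_ker hgh
    exact ⟨finrank 𝕜 (range f), finrank 𝕜 (range g), finrank 𝕜 (range h),
      by omega, by omega, by omega⟩
  · rintro ⟨a, b, c, h₁, h₂, h₃⟩
    obtain ⟨f, g, h, hfg, hgh, hhf⟩ := exists_exact_triangle_of_finrank_eq h₁ h₂ h₃
    exact ⟨f, g, h, hfg.linearMap_ker_eq.symm, hgh.linearMap_ker_eq.symm,
      hhf.linearMap_ker_eq.symm⟩
end

section
/- Let D be an endomorphism of a vector space V over a field and let k ≥ 0. Then: (1) D^{2k} maps ker(D^{2k+1}) onto range(D^{2k}) ∩ ker(D), i.e. the image of ker(D^{2k+1}) under D^{2k} equals range(D^{2k}) ∩ ker(D); and (2) for x ∈ ker(D^{2k+1}), one has D^{2k}x ∈ range(D^{2k+1}) ∩ ker(D) if and only if x ∈ (range(D) ∩ ker(D^{2k+1})) + ker(D^{2k}). Consequently D^{2k} induces a linear isomorphism from H^k_top(V,D) := ker(D^{2k+1}) / ((range(D) ∩ ker(D^{2k+1})) + ker(D^{2k})) onto H^k(V,D). (Proposition 5.1: the 'top' and 'bottom' versions of higher Dirac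 cohomology are naturally isomorphic.) -/
open LinearMap Module

/-- The `k`-th higher Dirac cohomology
`H^k(V,D) = (range D^{2k} ⊓ ker D) / (range D^{2k+1} ⊓ ker D)`. -/
abbrev higherDiracCohomology {𝕜 V : Type*} [Field 𝕜] [AddCommGroup V] [Module 𝕜 V]
    (D : Module.End 𝕜 V) (k : ℕ) :=
  ↥(range (D ^ (2 * k)) ⊓ ker D) ⧸
    Submodule.comap (range (D ^ (2 * k)) ⊓ ker D).subtype (range (D ^ (2 * k + 1)) ⊓ ker D)

/-- The "top" version of the `k`-th higher Dirac cohomology,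
`H^k_top(V,D) = ker D^{2k+1} / ((range D ⊓ ker D^{2k+1}) + ker D^{2k})`. -/
abbrev higherDiracCohomologyTop {𝕜 V : Type*} [Field 𝕜] [AddCommGroup V] [Module 𝕜 V]
    (D : Module.End 𝕜 V) (k : ℕ) :=
  ↥(ker (D ^ (2 * k + 1))) ⧸
    Submodule.comap (ker (D ^ (2 * k + 1))).subtype
      ((range D ⊓ ker (D ^ (2 * k + 1))) ⊔ ker (D ^ (2 * k)))

/-!
Because `D` commutes with its powers, `D^n` (for `n = 2k`) carries `ker D^{n+1}` onto
`range D^n ∩ ker D`. Moreover `D^n x = D^{n+1} z = D^n (D z)` says exactly that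
`x - D z ∈ ker D^n`, so `D^n x` lands in `range D^{n+1}` iff `x ∈ range D + ker D^n`; for
`x ∈ ker D^{n+1}` this is, by the modular law, the subspace killed in `H^k_top`. The isomorphism
is then the map induced by a surjection on quotients by a submodule and its preimage.
-/

namespace Submodule

variable {R M N : Type*} [Ring R] [AddCommGroup M] [AddCommGroup N] [Module R M] [Module R N]

noncomputable def quotientEquivOfSurjective (g : M →ₗ[R] N) (hg : Function.Surjective g)
    {P : Submodule R M} (T : Submodule R N) (hP : P = T.comap g) : (M ⧸ P) ≃ₗ[R] N ⧸ T :=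
  (P.quotEquivOfEq _ (by rw [hP, ker_comp, ker_mkQ])).trans
    ((T.mkQ ∘ₗ g).quotKerEquivOfSurjective (T.mkQ_surjective.comp hg))

@[simp]
theorem quotientEquivOfSurjective_mk (g : M →ₗ[R] N) (hg : Function.Surjective g)
    {P : Submodule R M} (T : Submodule R N) (hP : P = T.comap g) (x : M) :
    quotientEquivOfSurjective g hg T hP (Quotient.mk x) = Quotient.mk (g x) :=
  rfl

end Submodule

theorem LinearMap.restrict_surjective_of_map_eq {R M N : Type*} [Semiring R] [AddCommMonoid M]
    [AddCommMonoid N] [Module R M] [Module R N] {f : M →ₗ[R] N} {p : Submodule R M}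
    {q : Submodule R N} (h : p.map f = q) :
    Function.Surjective (f.restrict fun _ hx => h ▸ Submodule.mem_map_of_mem hx : p →ₗ[R] q) := by
  rintro ⟨y, hy⟩
  obtain ⟨x, hx, rfl⟩ := h ▸ hy
  exact ⟨⟨x, hx⟩, rfl⟩

namespace Module.End

variable {R M : Type*} [Ring R] [AddCommGroup M] [Module R M] (f : Module.End R M) (n : ℕ)

theorem apply_pow_apply (x : M) : f ((f ^ n) x) = (f ^ n) (f x) := by
  rw [← mul_apply, ← pow_succ', pow_succ, mul_apply]

theorem map_pow_ker_pow_succ : (ker (f ^ (n + 1))).map (f ^ n) = range (f ^ n) ⊓ ker f := by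
  ext y
  simp only [Submodule.mem_map, Submodule.mem_inf, mem_ker, mem_range, pow_succ, mul_apply]
  constructor
  · rintro ⟨x, hx, rfl⟩
    exact ⟨⟨x, rfl⟩, by rwa [apply_pow_apply]⟩
  · rintro ⟨⟨x, rfl⟩, hx⟩
    exact ⟨x, by rwa [← apply_pow_apply], rfl⟩

theorem pow_apply_mem_range_pow_succ_iff (x : M) :
    (f ^ n) x ∈ range (f ^ (n + 1)) ↔ x ∈ range f ⊔ ker (f ^ n) := by
  simp only [mem_range, Submodule.mem_sup, mem_ker, pow_succ, mul_apply]
  constructor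
  · rintro ⟨z, hz⟩
    exact ⟨f z, ⟨z, rfl⟩, x - f z, by rw [map_sub, hz, sub_self], add_sub_cancel _ _⟩
  · rintro ⟨_, ⟨z, rfl⟩, w, hw, rfl⟩
    exact ⟨z, by rw [map_add, hw, add_zero]⟩

theorem pow_apply_mem_range_pow_succ_inf_ker_iff {x : M} (hx : x ∈ ker (f ^ (n + 1))) :
    (f ^ n) x ∈ range (f ^ (n + 1)) ⊓ ker f ↔ x ∈ (range f ⊓ ker (f ^ (n + 1))) ⊔ ker (f ^ n) := by
  have hker : ker (f ^ n) ≤ ker (f ^ (n + 1)) := by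
    rw [pow_succ']
    exact LinearMap.ker_le_ker_comp _ _
  have hfx : (f ^ n) x ∈ ker f := ((map_pow_ker_pow_succ f n).le (Submodule.mem_map_of_mem hx)).2
  rw [inf_comm (range f), inf_sup_assoc_of_le _ hker, Submodule.mem_inf, Submodule.mem_inf,
    pow_apply_mem_range_pow_succ_iff]
  simp only [hx, hfx, and_true, true_and]

end Module.End

/-- Proposition 5.1. (1) `D^{2k}` maps `ker D^{2k+1}` onto
`range D^{2k} ∩ ker D`; (2) for `x ∈ ker D^{2k+1}`, `D^{2k} x ∈ range D^{2k+1} ∩ ker D`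
iff `x ∈ (range D ∩ ker D^{2k+1}) + ker D^{2k}`; consequently (3) `D^{2k}` induces a
linear isomorphism `H^k_top(V,D) ≅ H^k(V,D)`. -/
theorem stmt9 {𝕜 V : Type*} [Field 𝕜] [AddCommGroup V] [Module 𝕜 V]
    (D : Module.End 𝕜 V) (k : ℕ) :
    Submodule.map (D ^ (2 * k)) (ker (D ^ (2 * k + 1))) = range (D ^ (2 * k)) ⊓ ker D ∧
    (∀ x ∈ ker (D ^ (2 * k + 1)),
      ((D ^ (2 * k)) x ∈ range (D ^ (2 * k + 1)) ⊓ ker D ↔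
        x ∈ (range D ⊓ ker (D ^ (2 * k + 1))) ⊔ ker (D ^ (2 * k)))) ∧
    ∃ e : higherDiracCohomologyTop D k ≃ₗ[𝕜] higherDiracCohomology D k,
      ∀ (x : V) (hx : x ∈ ker (D ^ (2 * k + 1)))
        (hy : (D ^ (2 * k)) x ∈ range (D ^ (2 * k)) ⊓ ker D),
        e (Submodule.Quotient.mk ⟨x, hx⟩) = Submodule.Quotient.mk ⟨(D ^ (2 * k)) x, hy⟩ := by
  have hmap := Module.End.map_pow_ker_pow_succ D (2 * k)
  refine ⟨hmap, fun x hx => D.pow_apply_mem_range_pow_succ_inf_ker_iff _ hx,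
    Submodule.quotientEquivOfSurjective _ (LinearMap.restrict_surjective_of_map_eq hmap) _ ?_,
    fun x hx hy => Submodule.quotientEquivOfSurjective_mk _ _ _ _ _⟩
  ext ⟨x, hx⟩
  exact (D.pow_apply_mem_range_pow_succ_inf_ker_iff _ hx).symm
end

section
/- Let V be an m-dimensional vector space over a field, let D be an endomorphism with D^m = 0, and let v ∈ V satisfy D^{m−1}v ≠ 0 (so V is a single Jordan block of size m for D, with basis e_j := D^{m−j}v for 1 ≤ j ≤ m, satisfying D e_1 = 0 and D e_j = e_{j−1}). Let N ≥ m be an integer and let 1 ≤ i ≤ N−1. Then for each 1 ≤ j ≤ m: e_j ∈ ker(D^i) and e_j ∉ range(D^{N−i}) if and only if j ≤ i and i < j + N − m. (Proposition 5.3: the basis vector e_j contributes to the N-differential cohomology H_D^i = ker(D^i)/range(D^{N−i}) exactly when j ≤ i < j + N − m.) -/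
/-! For a cyclic vector `v` of a nilpotent `D` of index `m` (that is, `D ^ m = 0` and
`D ^ (m - 1) v ≠ 0`), `D ^ k v` vanishes exactly when `m ≤ k`. Hence `D ^ k v ∈ ker D ^ i`
iff `m ≤ i + k`, and, for `k < m`, `D ^ k v ∈ range D ^ l` iff `l ≤ k`: a preimage `w` of a
deeper power would give `D ^ (m - 1) v = D ^ (m - 1 - k + l) w = 0`. With `k = m - j` these are
the two conditions `j ≤ i` and `i < j + N - m`. -/

open LinearMap Module

namespace Module.End

variable {R M : Type*} [Semiring R] [AddCommMonoid M] [Module R M]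

theorem pow_apply_pow_apply (D : End R M) (a b : ℕ) (v : M) :
    (D ^ a) ((D ^ b) v) = (D ^ (a + b)) v := by
  rw [← mul_apply, ← pow_add]

theorem pow_eq_zero_of_le {D : End R M} {m k : ℕ} (hDm : D ^ m = 0) (hk : m ≤ k) :
    D ^ k = 0 := by
  rw [← Nat.sub_add_cancel hk, pow_add, hDm, mul_zero]

variable {D : End R M} {m : ℕ} {v : M}

theorem pow_apply_eq_zero_iff (hDm : D ^ m = 0) (hv : (D ^ (m - 1)) v ≠ 0) (k : ℕ) :
    (D ^ k) v = 0 ↔ m ≤ k := by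
  refine ⟨fun hk => ?_, fun hk => by rw [pow_eq_zero_of_le hDm hk, LinearMap.zero_apply]⟩
  by_contra! hkm
  apply hv
  rw [show m - 1 = (m - 1 - k) + k by omega, ← pow_apply_pow_apply, hk, map_zero]

theorem pow_apply_mem_ker_pow_iff (hDm : D ^ m = 0) (hv : (D ^ (m - 1)) v ≠ 0) (i k : ℕ) :
    (D ^ k) v ∈ ker (D ^ i) ↔ m ≤ i + k := by
  rw [mem_ker, pow_apply_pow_apply, pow_apply_eq_zero_iff hDm hv]

theorem pow_apply_mem_range_pow_iff (hDm : D ^ m = 0) (hv : (D ^ (m - 1)) v ≠ 0) {k : ℕ}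
    (hk : k < m) (l : ℕ) : (D ^ k) v ∈ range (D ^ l) ↔ l ≤ k := by
  refine ⟨fun ⟨w, hw⟩ => ?_, fun hl => ⟨(D ^ (k - l)) v, ?_⟩⟩
  · by_contra! hlk
    apply hv
    rw [show m - 1 = (m - 1 - k) + k by omega, ← pow_apply_pow_apply, ← hw,
      pow_apply_pow_apply, pow_eq_zero_of_le hDm (by omega), LinearMap.zero_apply]
  · rw [pow_apply_pow_apply, Nat.add_sub_cancel' hl]

end Module.End

theorem stmt10_general {𝕜 V : Type*} [Field 𝕜] [AddCommGroup V] [Module 𝕜 V]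
    (m : ℕ) (D : Module.End 𝕜 V) (hDm : D ^ m = 0)
    (v : V) (hv : (D ^ (m - 1)) v ≠ 0)
    (N i j : ℕ) (hN : m ≤ N) (hj1 : 1 ≤ j) (hj2 : j ≤ m) :
    ((D ^ (m - j)) v ∈ ker (D ^ i) ∧ (D ^ (m - j)) v ∉ range (D ^ (N - i))) ↔
      (j ≤ i ∧ i < j + N - m) := by
  rw [End.pow_apply_mem_ker_pow_iff hDm hv,
    End.pow_apply_mem_range_pow_iff hDm hv (by omega : m - j < m)]
  omega

/-- Proposition 5.3. Let `V` be an `m`-dimensional space,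
`D^m = 0`, and `v` with `D^{m−1} v ≠ 0`, so `V` is a single Jordan block with basis
`e_j = D^{m−j} v`, `1 ≤ j ≤ m`. Let `N ≥ m` and `1 ≤ i ≤ N−1`. Then for `1 ≤ j ≤ m`:
`e_j ∈ ker D^i` and `e_j ∉ range D^{N−i}` iff `j ≤ i` and `i < j + N − m`. -/
theorem stmt10 {𝕜 V : Type*} [Field 𝕜] [AddCommGroup V] [Module 𝕜 V] [FiniteDimensional 𝕜 V]
    (m : ℕ) (hdim : finrank 𝕜 V = m) (D : Module.End 𝕜 V) (hDm : D ^ m = 0)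
    (v : V) (hv : (D ^ (m - 1)) v ≠ 0)
    (N i j : ℕ) (hN : m ≤ N) (hi1 : 1 ≤ i) (hi2 : i ≤ N - 1) (hj1 : 1 ≤ j) (hj2 : j ≤ m) :
    ((D ^ (m - j)) v ∈ ker (D ^ i) ∧ (D ^ (m - j)) v ∉ range (D ^ (N - i))) ↔
      (j ≤ i ∧ i < j + N - m) :=
  stmt10_general m D hDm v hv N i j hN hj1 hj2
end

section
/- Let V be a finite-dimensional vector space over a field, let N ≥ 1 be an integer, and let D be an endomorphism of V with D^{2N} = 0. Then, as an equality of integers, Σ_{k≥0} dim H^k(V,D) = Σ_{i=1}^{2N−1} (−1)^{i−1} ( dim ker(D^i) − dim range(D^{2N−i}) ), where the left-hand sum has only finitely many nonzero terms. (Proposition 5.5: the total higher Dirac cohomology equals the alternating sum of the N-differential cohomologies H_D^i = ker(D^i)/range(D^{2N−i}) in the Grothendieck group; here stated in dimension form, noting dim(ker(D^i)/range(D^{2N−i})) = dim ker(D^i) − dim range(D^{2N−i}) since range(D^{2N−i}) ⊆ ker(D^i).) -/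
/-!
Write `g j = dim ker D^j`. Restricting `D^j` to `ker D^{j+1} = (D^j)⁻¹(ker D)` and applying
rank–nullity gives `dim (range D^j ⊓ ker D) = g (j+1) - g j`, and `dim range D^m = g (2N) - g m`
because `ker D^{2N}` is everything. Both sides of the identity thereby become linear in `g`, with
`g 0 = 0`: the left side is a sum of second differences at odd points, and the right side equals
twice the alternating sum of `g` minus `g (2N)`, since the alternating sum is invariant under
`i ↦ 2N - i` and the signs sum to `1`.
-/

open LinearMap Module Finset

section Arithmetic

variable {R : Type*} [CommRing R]

theorem sum_Icc_neg_one_pow_mul_eq (f : ℕ → R) {N : ℕ} (hN : 1 ≤ N) :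
    ∑ i ∈ Icc 1 (2 * N - 1), (-1) ^ (i - 1) * f i =
      f 0 + ∑ k ∈ range N, (f (2 * k + 1) - f (2 * k)) := by
  induction N, hN using Nat.le_induction with
  | base => simp
  | succ N hN ih =>
    rw [show 2 * (N + 1) - 1 = 2 * N - 1 + 1 + 1 by omega, sum_Icc_succ_top (by omega),
      sum_Icc_succ_top (by omega), ih, sum_range_succ, show 2 * N - 1 + 1 = 2 * N by omega,
      Nat.add_sub_cancel, Odd.neg_one_pow ⟨N - 1, by omega⟩, Even.neg_one_pow ⟨N, by omega⟩]
    ring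

theorem sum_Icc_neg_one_pow_mul_reflect (f : ℕ → R) (N : ℕ) :
    ∑ i ∈ Icc 1 (2 * N - 1), (-1) ^ (i - 1) * f (2 * N - i) =
      ∑ i ∈ Icc 1 (2 * N - 1), (-1) ^ (i - 1) * f i := by
  refine sum_nbij' (2 * N - ·) (2 * N - ·) ?_ ?_ ?_ ?_ fun i hi => ?_
  any_goals simp only [mem_Icc]; omega
  rw [mem_Icc] at hi
  rw [neg_one_pow_eq_pow_mod_two (i - 1), neg_one_pow_eq_pow_mod_two (2 * N - i - 1),
    show (i - 1) % 2 = (2 * N - i - 1) % 2 by omega]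

theorem sum_range_sub_sub_eq_sum_Icc_neg_one_pow_mul (g : ℕ → R) (hg : g 0 = 0) {N : ℕ}
    (hN : 1 ≤ N) :
    ∑ k ∈ range N, ((g (2 * k + 1) - g (2 * k)) - (g (2 * k + 1 + 1) - g (2 * k + 1))) =
      ∑ i ∈ Icc 1 (2 * N - 1), (-1) ^ (i - 1) * (g i - (g (2 * N) - g (2 * N - i))) := by
  have hsign : ∑ i ∈ Icc 1 (2 * N - 1), (-1 : R) ^ (i - 1) = 1 := by
    simpa using sum_Icc_neg_one_pow_mul_eq (fun _ => (1 : R)) hN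
  have htel : ∑ k ∈ range N, (g (2 * k + 1 + 1) - g (2 * k)) = g (2 * N) - g 0 :=
    sum_range_sub (fun k => g (2 * k)) N
  rw [sum_sub_distrib] at htel
  simp only [mul_sub, sum_sub_distrib, ← sum_mul, hsign, sum_Icc_neg_one_pow_mul_reflect (f := g),
    sum_Icc_neg_one_pow_mul_eq g hN]
  linear_combination -htel - hg

end Arithmetic

section FiniteDimensional

variable {K V W : Type*} [DivisionRing K] [AddCommGroup V] [Module K V] [AddCommGroup W]
  [Module K W] [FiniteDimensional K V]

theorem LinearMap.finrank_comap_eq_finrank_range_inf_add_finrank_ker (φ : V →ₗ[K] W)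
    (p : Submodule K W) :
    finrank K (p.comap φ) = finrank K ↥(range φ ⊓ p) + finrank K (ker φ) := by
  have := (φ.domRestrict (p.comap φ)).finrank_range_add_finrank_ker
  rw [range_domRestrict, Submodule.map_comap_eq, ker_domRestrict,
    (Submodule.comapSubtypeEquivOfLe (ker_le_comap φ)).finrank_eq] at this
  exact this.symm

theorem Module.End.finrank_ker_pow_succ (f : Module.End K V) (j : ℕ) :
    finrank K (ker (f ^ (j + 1))) =
      finrank K ↥(range (f ^ j) ⊓ ker f) + finrank K (ker (f ^ j)) := by
  rw [pow_succ', mul_eq_comp, ker_comp, finrank_comap_eq_finrank_range_inf_add_finrank_ker]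

end FiniteDimensional

/-- Proposition 5.5, dimension form. If `D^{2N} = 0` on the
finite-dimensional space `V` (`N ≥ 1`), then the total dimension of the higher
Dirac cohomology `Σ_{k≥0} dim H^k(V,D)` (with
`dim H^k(V,D) = dim(range D^{2k} ⊓ ker D) − dim(range D^{2k+1} ⊓ ker D)`) equals
the alternating sum `Σ_{i=1}^{2N−1} (−1)^{i−1} (dim ker D^i − dim range D^{2N−i})`. -/
theorem stmt13 {𝕜 V : Type*} [Field 𝕜] [AddCommGroup V] [Module 𝕜 V] [FiniteDimensional 𝕜 V]
    (D : Module.End 𝕜 V) (N : ℕ) (hN : 1 ≤ N) (hD : D ^ (2 * N) = 0) :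
    ∑ᶠ k : ℕ,
      ((finrank 𝕜 ↥(range (D ^ (2 * k)) ⊓ ker D) : ℤ) -
        finrank 𝕜 ↥(range (D ^ (2 * k + 1)) ⊓ ker D)) =
    ∑ i ∈ Finset.Icc 1 (2 * N - 1),
      (-1 : ℤ) ^ (i - 1) *
        ((finrank 𝕜 ↥(ker (D ^ i)) : ℤ) - finrank 𝕜 ↥(range (D ^ (2 * N - i)))) := by
  set g : ℕ → ℤ := fun j => finrank 𝕜 (ker (D ^ j))
  have hstep (j : ℕ) : (finrank 𝕜 ↥(range (D ^ j) ⊓ ker D) : ℤ) = g (j + 1) - g j := by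
    simp only [g, D.finrank_ker_pow_succ j]; push_cast; ring
  have hg_top : g (2 * N) = finrank 𝕜 V := by
    simp only [g]; rw [hD, ker_zero, finrank_top]
  have hrange (m : ℕ) : (finrank 𝕜 (range (D ^ m)) : ℤ) = g (2 * N) - g m := by
    have := (D ^ m).finrank_range_add_finrank_ker
    simp only [hg_top, g]; omega
  rw [finsum_eq_sum_of_support_subset (s := range N)]
  · simp only [hstep, hrange]
    exact sum_range_sub_sub_eq_sum_Icc_neg_one_pow_mul g (by simp [g, End.one_eq_id]) hN
  refine Function.support_subset_iff'.2 fun k hk => ?_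
  rw [mem_coe, mem_range, not_lt] at hk
  rw [pow_eq_zero_of_le (by omega : 2 * N ≤ 2 * k) hD,
    pow_eq_zero_of_le (by omega : 2 * N ≤ 2 * k + 1) hD]
  simp
end
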